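/- arXiv:2512.23823 — 2 statements merged into one kernel-verified Lean document; each statement's English description precedes it below -/
import Mathlib

section
/- Let A_r be the (r+1)×(r+1) creation matrix over ℚ with (A_r)_{i,i−1} = i and all other entries zero, and let P_r(z) be the generalized Pascal matrix with entries (P_r(z))_{i,j} = C(i,j)·z^{i−j} for j ≤ i and 0 otherwise. Then for every z ∈ ℚ, exp(z·A_r) = P_r(z), where exp is the matrix exponential (which is a finite sum since A_r is nilpotent). -/
open Finset

/-- The creation matrix over ℚ. -/
def creationMatrix (r : ℕ) : Matrix (Fin (r + 1)) (Fin (r + 1)) ℚ :=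
  Matrix.of fun i j => if (i : ℕ) = (j : ℕ) + 1 then ((i : ℕ) : ℚ) else 0

/-- The generalized Pascal matrix. -/
def pascalMatrix (r : ℕ) (z : ℚ) : Matrix (Fin (r + 1)) (Fin (r + 1)) ℚ :=
  Matrix.of fun i j =>
    if (j : ℕ) ≤ (i : ℕ) then ((i : ℕ).choose (j : ℕ) : ℚ) * z ^ ((i : ℕ) - (j : ℕ)) else 0

lemma creation_pow (r n : ℕ) (i j : Fin (r + 1)) :
    (creationMatrix r ^ n) i j =
      if (i : ℕ) = (j : ℕ) + n then ((i : ℕ).factorial : ℚ) / ((j : ℕ).factorial : ℚ)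
      else 0 := by
  induction n generalizing i j with
  | zero =>
    simp only [pow_zero, Matrix.one_apply, Nat.add_zero]
    rcases eq_or_ne i j with h | h
    · subst h
      simp [Nat.factorial_ne_zero]
    · rw [if_neg h, if_neg (fun hc => h (Fin.ext hc))]
  | succ n ih =>
    rw [pow_succ, Matrix.mul_apply]
    by_cases hj : (j : ℕ) + 1 ≤ r
    · have hjr : (j : ℕ) + 1 < r + 1 := Nat.lt_succ_of_le hj
      rw [Finset.sum_eq_single (⟨(j : ℕ) + 1, hjr⟩ : Fin (r + 1))]
      · rw [ih]
        simp only [creationMatrix, Matrix.of_apply]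
        rw [if_pos trivial]
        rcases eq_or_ne (i : ℕ) ((j : ℕ) + 1 + n) with h | h
        · rw [if_pos h, if_pos (by omega)]
          rw [Nat.factorial_succ]
          push_cast
          field_simp
        · rw [if_neg h, if_neg (by omega), zero_mul]
      · intro b _ hb
        have : (b : ℕ) ≠ (j : ℕ) + 1 := fun hc => hb (Fin.ext hc)
        simp [creationMatrix, this]
      · intro h; exact absurd (Finset.mem_univ _) h
    · have : ∀ b : Fin (r + 1), (creationMatrix r ^ n) i b * creationMatrix r b j = 0 := by
        intro b
        have : (b : ℕ) ≠ (j : ℕ) + 1 := by omega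
        simp [creationMatrix, this]
      rw [Finset.sum_eq_zero (fun b _ => this b), if_neg (by omega)]

theorem pascal_eq_exp_creation (r : ℕ) (z : ℚ) :
    ∑ n ∈ range (r + 1), (z ^ n / (n.factorial : ℚ)) • creationMatrix r ^ n =
      pascalMatrix r z := by
  ext i j
  rw [Matrix.sum_apply]
  simp only [Matrix.smul_apply, creation_pow, smul_eq_mul, pascalMatrix, Matrix.of_apply]
  by_cases h : (j : ℕ) ≤ (i : ℕ)
  · rw [if_pos h]
    rw [Finset.sum_eq_single ((i : ℕ) - (j : ℕ))]
    · rw [if_pos (by omega)]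
      rw [Nat.cast_choose ℚ h]
      field_simp
    · intro b _ hb
      rw [if_neg (by omega), mul_zero]
    · intro hc
      exact absurd (Finset.mem_range.mpr (by omega)) hc
  · rw [if_neg h]
    refine Finset.sum_eq_zero fun n _ => ?_
    rw [if_neg (by omega), mul_zero]
end

section
/- Let R be a commutative ring, C, E ∈ R, z ∈ R a unit, and B_0, …, B_r ∈ R. Fix ℓ ≤ r and define g_t := C^t Σ_{m=0}^{r−t} {r,t}_m B_{t+m} E^m for t ≤ r, where {r,t}_m = (m+t)!(r−t)!/(m! r!) (assume R is a ℚ-algebra so these scalars make sense). Then the binomial expansion identity holds: C^ℓ Σ_{m=0}^{r−ℓ} {r,ℓ}_m B_{ℓ+m} (E + C z^{−1})^m = Σ_{p=0}^{r−ℓ} C(r−ℓ, p) g_{ℓ+p} z^{−p}. -/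
open Finset

/-- {r,t}_m := (m+t)!·(r−t)!/(m!·r!) as a rational number. -/
def brace (r t m : ℕ) : ℚ :=
  (Nat.factorial (m + t) * Nat.factorial (r - t)) / (Nat.factorial m * Nat.factorial r)

private lemma tri_sum {M : Type*} [AddCommMonoid M] (n : ℕ) (f : ℕ → ℕ → M) :
    ∑ m ∈ range (n + 1), ∑ k ∈ range (m + 1), f m k
      = ∑ p ∈ range (n + 1), ∑ q ∈ range (n - p + 1), f (p + q) q := by
  rw [Finset.sum_sigma', Finset.sum_sigma']
  refine Finset.sum_nbij' (i := fun x : (_ : ℕ) × ℕ => (⟨x.1 - x.2, x.2⟩ : (_ : ℕ) × ℕ))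
    (j := fun x : (_ : ℕ) × ℕ => (⟨x.1 + x.2, x.2⟩ : (_ : ℕ) × ℕ)) ?_ ?_ ?_ ?_ ?_
  · rintro ⟨a, b⟩ h
    simp only [Finset.mem_sigma, Finset.mem_range] at *
    omega
  · rintro ⟨a, b⟩ h
    simp only [Finset.mem_sigma, Finset.mem_range] at *
    omega
  · rintro ⟨a, b⟩ h
    simp only [Finset.mem_sigma, Finset.mem_range] at h
    have : a - b + b = a := by omega
    simp [this]
  · rintro ⟨a, b⟩ h
    simp
  · rintro ⟨a, b⟩ h
    simp only [Finset.mem_sigma, Finset.mem_range] at h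
    have : a - b + b = a := by omega
    simp [this]

private lemma brace_identity {r ℓ p q : ℕ} (hℓ : ℓ ≤ r) (hpq : p + q ≤ r - ℓ) :
    brace r ℓ (p + q) * ((p + q).choose q : ℚ)
      = ((r - ℓ).choose p : ℚ) * brace r (ℓ + p) q := by
  have h1 : q ≤ p + q := Nat.le_add_left _ _
  have h2 : p ≤ r - ℓ := by omega
  rw [Nat.cast_choose ℚ h1, Nat.cast_choose ℚ h2]
  unfold brace
  have e1 : p + q - q = p := by omega
  have e2 : r - (ℓ + p) = r - ℓ - p := by omega
  have e3 : q + (ℓ + p) = p + q + ℓ := by omega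
  rw [e1, e2, e3]
  have f1 : (Nat.factorial (p + q) : ℚ) ≠ 0 := Nat.cast_ne_zero.mpr (Nat.factorial_ne_zero _)
  have f2 : (Nat.factorial q : ℚ) ≠ 0 := Nat.cast_ne_zero.mpr (Nat.factorial_ne_zero _)
  have f3 : (Nat.factorial p : ℚ) ≠ 0 := Nat.cast_ne_zero.mpr (Nat.factorial_ne_zero _)
  have f4 : (Nat.factorial r : ℚ) ≠ 0 := Nat.cast_ne_zero.mpr (Nat.factorial_ne_zero _)
  have f5 : (Nat.factorial (r - ℓ - p) : ℚ) ≠ 0 := Nat.cast_ne_zero.mpr (Nat.factorial_ne_zero _)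
  field_simp

theorem g_under_S_core {R : Type*} [CommRing R] [Algebra ℚ R] (r ℓ : ℕ) (hℓ : ℓ ≤ r)
    (C E z zi : R) (hz : z * zi = 1) (B : ℕ → R) (g : ℕ → R)
    (hg : ∀ t ≤ r, g t = C ^ t * ∑ m ∈ range (r - t + 1), brace r t m • (B (t + m) * E ^ m)) :
    C ^ ℓ * ∑ m ∈ range (r - ℓ + 1), brace r ℓ m • (B (ℓ + m) * (E + C * zi) ^ m) =
      ∑ p ∈ range (r - ℓ + 1), ((r - ℓ).choose p : R) * g (ℓ + p) * zi ^ p := by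
  set n := r - ℓ with hn
  -- rewrite RHS using hg
  have hRHS : ∀ p ∈ range (n + 1),
      ((n.choose p : R) * g (ℓ + p) * zi ^ p)
        = ∑ q ∈ range (n - p + 1), (n.choose p : R) *
            (C ^ (ℓ + p) * (brace r (ℓ + p) q • (B (ℓ + p + q) * E ^ q))) * zi ^ p := by
    intro p hp
    rw [mem_range] at hp
    rw [hg (ℓ + p) (by omega)]
    have : r - (ℓ + p) = n - p := by omega
    rw [this]
    simp only [Finset.mul_sum, Finset.sum_mul]
  rw [Finset.sum_congr rfl hRHS]
  -- expand LHS with add_pow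
  have hLHS : C ^ ℓ * ∑ m ∈ range (n + 1), brace r ℓ m • (B (ℓ + m) * (E + C * zi) ^ m)
      = ∑ m ∈ range (n + 1), ∑ k ∈ range (m + 1),
          C ^ ℓ * (brace r ℓ m • (B (ℓ + m) * (E ^ k * (C * zi) ^ (m - k) * (m.choose k : R)))) := by
    rw [Finset.mul_sum]
    refine Finset.sum_congr rfl fun m hm => ?_
    rw [add_pow, Finset.mul_sum, Finset.smul_sum, Finset.mul_sum]
  rw [hLHS, tri_sum]
  refine Finset.sum_congr rfl fun p hp => Finset.sum_congr rfl fun q hq => ?_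
  rw [mem_range] at hp hq
  have e1 : p + q - q = p := by omega
  have e2 : ℓ + (p + q) = ℓ + p + q := by omega
  rw [e1, e2, Algebra.smul_def, Algebra.smul_def]
  have key : algebraMap ℚ R (brace r ℓ (p + q)) * ((p + q).choose q : R)
      = ((n.choose p : R)) * algebraMap ℚ R (brace r (ℓ + p) q) := by
    have := brace_identity hℓ (show p + q ≤ r - ℓ by omega)
    calc algebraMap ℚ R (brace r ℓ (p + q)) * ((p + q).choose q : R)
        = algebraMap ℚ R (brace r ℓ (p + q) * ((p + q).choose q : ℚ)) := by
          rw [map_mul, map_natCast]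
      _ = algebraMap ℚ R (((r - ℓ).choose p : ℚ) * brace r (ℓ + p) q) := by rw [this]
      _ = ((n.choose p : R)) * algebraMap ℚ R (brace r (ℓ + p) q) := by
          rw [map_mul, map_natCast, hn]
  calc C ^ ℓ * (algebraMap ℚ R (brace r ℓ (p + q)) *
          (B (ℓ + p + q) * (E ^ q * (C * zi) ^ p * ((p + q).choose q : R))))
      = (algebraMap ℚ R (brace r ℓ (p + q)) * ((p + q).choose q : R)) *
          (C ^ ℓ * B (ℓ + p + q) * E ^ q * (C * zi) ^ p) := by ring
    _ = ((n.choose p : R)) * algebraMap ℚ R (brace r (ℓ + p) q) *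
          (C ^ ℓ * B (ℓ + p + q) * E ^ q * (C * zi) ^ p) := by rw [key]
    _ = (n.choose p : R) * (C ^ (ℓ + p) *
          (algebraMap ℚ R (brace r (ℓ + p) q) * (B (ℓ + p + q) * E ^ q))) * zi ^ p := by
          rw [mul_pow, pow_add]; ring
end
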